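/- Let p ≥ 2 be an integer and let e ∈ ℤ^{p-1}. Suppose that, in case p is even, Σ_{j=1}^{p-1} j·e_j is even. Then there exists c ∈ ℤ^{p-1} such that P·c ≡ e (mod 2) componentwise. (This is the algebraic form of: every class e ∈ H₂(C_p,∂C_p;ℤ) with ∂e ≡ 0 (mod 2) when p is even is mod-2 congruent to the image of a class in H₂(C_p;ℤ).) -/
import Mathlib


def ee (n : ℕ) (e : Fin n → ℤ) (i : ℕ) : ℤ :=
  if h : i < n then e ⟨i, h⟩ else 0

def cc (n : ℕ) (e : Fin n → ℤ) (t : ℤ) (j : ℕ) : ℤ :=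
  (if Even j then t else 0) + ∑ i ∈ Finset.range j, if Even (i + j) then 0 else ee n e i

lemma cc_zero (n e t) : cc n e t 0 = t := by simp [cc]

lemma cc_one (n e t) : cc n e t 1 = ee n e 0 := by
  simp [cc, Finset.sum_range_one]

lemma cc_rec (n e t j) : cc n e t (j+2) = cc n e t j + ee n e (j+1) := by
  unfold cc
  rw [Finset.sum_range_succ, Finset.sum_range_succ]
  have h1 : ∀ i ∈ Finset.range j,
      (if Even (i + (j+2)) then (0:ℤ) else ee n e i)
        = (if Even (i + j) then 0 else ee n e i) := by
    intro i _
    have : Even (i + (j+2)) ↔ Even (i + j) := by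
      simp only [Nat.even_iff]; omega
    simp [this]
  rw [Finset.sum_congr rfl h1]
  have h2 : Even (j + 2) ↔ Even j := by simp only [Nat.even_iff]; omega
  have h3 : Even (j + (j + 2)) := by simp only [Nat.even_iff]; omega
  have h4 : ¬ Even ((j+1) + (j + 2)) := by simp only [Nat.even_iff]; omega
  simp [h2, h3, h4]; ring

lemma cc_add (n e t j) :
    cc n e t j + cc n e t (j+1) = t + ∑ i ∈ Finset.range (j+1), ee n e i := by
  induction j with
  | zero => simp [cc_zero, cc_one, Finset.sum_range_one]
  | succ j ih =>
      rw [show j + 1 + 1 = j + 2 from rfl, cc_rec, Finset.sum_range_succ]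
      omega

lemma tri_sum (p n : ℕ) (c : ℕ → ℤ) (i : ℕ) (hi : i < n) :
    (∑ j ∈ Finset.range n, (if i = j then (if i = p-2 then -((p:ℤ)+2) else -2)
      else if i+1 = j ∨ j+1 = i then 1 else 0) * c j)
    = (if 1 ≤ i then c (i-1) else 0)
      + (if i = p - 2 then -((p:ℤ)+2) else -2) * c i
      + (if i + 1 < n then c (i+1) else 0) := by
  have key : ∀ j ∈ Finset.range n,
      (if i = j then (if i = p-2 then -((p:ℤ)+2) else -2)
        else if i+1 = j ∨ j+1 = i then 1 else 0) * c j
      = (if 1 ≤ i then (if j = i-1 then c j else 0) else 0)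
        + (if j = i then (if i = p-2 then -((p:ℤ)+2) else -2) * c j else 0)
        + (if j = i+1 then c j else 0) := by
    intro j _
    split_ifs <;> (try (exfalso; omega)) <;> ring
  rw [Finset.sum_congr rfl key]
  rw [Finset.sum_add_distrib, Finset.sum_add_distrib]
  rw [Finset.sum_ite_eq' (Finset.range n) i, Finset.sum_ite_eq' (Finset.range n) (i+1)]
  by_cases h1 : 1 ≤ i
  · simp only [if_pos h1, Finset.sum_ite_eq' (Finset.range n) (i-1), Finset.mem_range]
    rw [if_pos (by omega), if_pos hi]
  · simp only [if_neg h1, Finset.sum_const_zero, Finset.mem_range]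
    rw [if_pos hi]

lemma mod2 (a b k : ℤ) (h : a = b + 2*k) : a ≡ b [ZMOD 2] := by
  subst h; show _ % 2 = _ % 2; omega

/-- The plumbing matrix `P` of the configuration `C_p` over `ℤ`. In the basis
`γ_1,…,γ_{p-1}` of `H₂(C_p,∂C_p;ℤ)` dual to `u_1,…,u_{p-1}`, the inclusion-induced map
`H₂(C_p;ℤ) → H₂(C_p,∂C_p;ℤ)` is given by this matrix. -/
def plumbing (p : ℕ) : Matrix (Fin (p-1)) (Fin (p-1)) ℤ :=
  Matrix.of fun i j =>
    if i = j then (if (i : ℕ) = p - 2 then -((p : ℤ) + 2) else -2)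
    else if (i : ℕ) + 1 = (j : ℕ) ∨ (j : ℕ) + 1 = (i : ℕ) then 1 else 0

/-- if `e ∈ ℤ^{p-1}` has `Σ j·e_j` even in case `p` is even (i.e. the
boundary `∂e ∈ ℤ_{p²}` is even), then there is `c ∈ ℤ^{p-1}` with `P·c ≡ e (mod 2)`
componentwise: every such class is mod-2 congruent to the image of a class in
`H₂(C_p;ℤ)`. -/
theorem stmt_11 (p : ℕ) (hp : 2 ≤ p) (e : Fin (p-1) → ℤ)
    (h : Even p → Even (∑ j : Fin (p-1), ((j : ℕ) + 1 : ℤ) * e j)) :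
    ∃ c : Fin (p-1) → ℤ, ∀ i, (plumbing p).mulVec c i ≡ e i [ZMOD 2] := by
  set t : ℤ := if Even p then 0
    else ee (p-1) e (p-2) - ∑ i ∈ Finset.range (p-2), ee (p-1) e i with ht
  refine ⟨fun j => cc (p-1) e t (j:ℕ), fun i => ?_⟩
  have hS : (∑ j : Fin (p-1), ((j : ℕ) + 1 : ℤ) * e j)
      = ∑ j ∈ Finset.range (p-1), ((j:ℤ)+1) * ee (p-1) e j := by
    rw [← Fin.sum_univ_eq_sum_range (fun k => ((k:ℤ)+1) * ee (p-1) e k) (p-1)]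
    refine Finset.sum_congr rfl fun j _ => ?_
    simp [ee, j.isLt]
  have he : ee (p-1) e (i:ℕ) = e i := by simp [ee, i.isLt]
  have hm : (plumbing p).mulVec (fun j => cc (p-1) e t (j:ℕ)) i
      = ∑ j ∈ Finset.range (p-1), (if (i:ℕ) = j then (if (i:ℕ) = p-2 then -((p:ℤ)+2) else -2)
          else if (i:ℕ)+1 = j ∨ j+1 = (i:ℕ) then 1 else 0) * cc (p-1) e t j := by
    rw [← Fin.sum_univ_eq_sum_range (fun k =>
      (if (i:ℕ) = k then (if (i:ℕ) = p-2 then -((p:ℤ)+2) else -2)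
        else if (i:ℕ)+1 = k ∨ k+1 = (i:ℕ) then 1 else 0) * cc (p-1) e t k) (p-1)]
    simp only [Matrix.mulVec, dotProduct]
    refine Finset.sum_congr rfl fun j _ => ?_
    simp only [plumbing, Matrix.of_apply, Fin.ext_iff]
  rw [hm, tri_sum p (p-1) _ (i:ℕ) i.isLt]
  by_cases hlast : (i:ℕ) = p - 2
  · -- last row
    have hee : ee (p-1) e (p-2) = e i := by rw [← hlast]; exact he
    by_cases hp2 : p = 2
    · -- p = 2 : single row
      have hi0 : (i:ℕ) = 0 := by omega
      have hev : Even p := by rw [hp2]; decide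
      have ht0 : t = 0 := by rw [ht, if_pos hev]
      obtain ⟨k, hk⟩ := h hev
      have hr1 : Finset.range (p-1) = {0} := by
        rw [show p - 1 = 1 by omega]; rfl
      have he0 : ee (p-1) e 0 = e i := by rw [← hi0]; exact he
      have hek : e i = k + k := by
        rw [hS, hr1, Finset.sum_singleton, he0] at hk
        push_cast at hk
        linarith
      rw [if_neg (by omega), if_pos hlast, if_neg (by omega)]
      refine mod2 _ _ (-k) ?_
      rw [hi0, cc_zero, ht0]
      linear_combination -hek
    · -- p ≥ 3
      have hp3 : 3 ≤ p := by omega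
      rw [hlast, if_pos (by omega), if_pos rfl, if_neg (by omega),
        show p - 2 - 1 = p - 3 from by omega]
      rcases Nat.even_or_odd p with hev | hod
      · -- p even, p ≥ 4
        have hodd3 : ¬ Even (p-3) := by
          simp only [Nat.even_iff] at hev ⊢; omega
        have hcc : cc (p-1) e t (p-3)
            = ∑ j ∈ Finset.range (p-3), if Even (j+1) then 0 else ee (p-1) e j := by
          unfold cc
          rw [if_neg hodd3, zero_add]
          refine Finset.sum_congr rfl fun j _ => ?_
          have : Even (j + (p-3)) ↔ Even (j+1) := by
            simp only [Nat.even_iff] at hev ⊢; omega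
          simp [this]
        have hr : Finset.range (p-1) = Finset.range ((p-3)+1+1) := by
          rw [show p - 1 = p - 3 + 1 + 1 by omega]
        have hT : (∑ j ∈ Finset.range (p-1), if Even (j+1) then 0 else ee (p-1) e j)
            = cc (p-1) e t (p-3) + ee (p-1) e (p-2) := by
          rw [hr, Finset.sum_range_succ, Finset.sum_range_succ, ← hcc]
          have h1 : Even ((p-3) + 1) := by simp only [Nat.even_iff] at hev ⊢; omega
          have h2 : ¬ Even ((p-3) + 1 + 1) := by simp only [Nat.even_iff] at hev ⊢; omega
          rw [if_pos h1, if_neg h2, show p - 3 + 1 = p - 2 by omega]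
          ring
        have hdvd : (2:ℤ) ∣ (∑ j ∈ Finset.range (p-1), ((j:ℤ)+1) * ee (p-1) e j)
            - (∑ j ∈ Finset.range (p-1), if Even (j+1) then 0 else ee (p-1) e j) := by
          rw [← Finset.sum_sub_distrib]
          refine Finset.dvd_sum fun j _ => ?_
          by_cases hj : Even (j+1)
          · rw [if_pos hj, sub_zero]
            refine Dvd.dvd.mul_right ?_ _
            obtain ⟨m, hm⟩ := hj
            exact ⟨m, by omega⟩
          · rw [if_neg hj]
            have hj' : Even j := by simp only [Nat.even_iff] at hj ⊢; omega
            obtain ⟨m, hm⟩ := hj'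
            exact ⟨m * ee (p-1) e j, by push_cast [hm]; ring⟩
        obtain ⟨s, hs⟩ := h hev
        rw [hS] at hs
        obtain ⟨u, hu⟩ := hdvd
        have hd : cc (p-1) e t (p-3) - ee (p-1) e (p-2)
            = 2 * (s - u - ee (p-1) e (p-2)) := by
          linear_combination -hT + hs - hu
        obtain ⟨m, hmm⟩ := hev
        have hpz : (p:ℤ) = 2*m := by push_cast [hmm]; ring
        refine mod2 _ _ ((s - u - ee (p-1) e (p-2)) - (m+1) * cc (p-1) e t (p-2)) ?_
        linear_combination hd + hee - cc (p-1) e t (p-2) * hpz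
      · -- p odd
        have hne : ¬ Even p := Nat.not_even_iff_odd.mpr hod
        have ht1 : t = ee (p-1) e (p-2) - ∑ i ∈ Finset.range (p-2), ee (p-1) e i := by
          rw [ht, if_neg hne]
        have hadd := cc_add (p-1) e t (p-3)
        rw [show p - 3 + 1 = p - 2 by omega] at hadd
        have hsum : cc (p-1) e t (p-3) + cc (p-1) e t (p-2) = ee (p-1) e (p-2) := by
          rw [hadd, ht1]; ring
        obtain ⟨m, hmm⟩ := hod
        have hpz : (p:ℤ) = 2*m+1 := by push_cast [hmm]; ring
        refine mod2 _ _ (-(m+2) * cc (p-1) e t (p-2)) ?_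
        linear_combination hsum + hee - cc (p-1) e t (p-2) * hpz
  · -- not last row
    have hmid : (i:ℕ) + 1 < p - 1 := by have := i.isLt; omega
    rw [if_neg hlast, if_pos hmid]
    by_cases hz : (i:ℕ) = 0
    · rw [if_neg (by omega)]
      have he0 : ee (p-1) e 0 = e i := by rw [← hz]; exact he
      have h1 : cc (p-1) e t ((i:ℕ)+1) = ee (p-1) e 0 := by
        rw [hz]; exact cc_one _ _ _
      refine mod2 _ _ (- cc (p-1) e t (i:ℕ)) ?_
      linear_combination h1 + he0
    · rw [if_pos (by omega)]
      have hrw : (i:ℕ) + 1 = ((i:ℕ) - 1) + 2 := by omega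
      rw [hrw, cc_rec, show (i:ℕ) - 1 + 1 = (i:ℕ) by omega, he]
      exact mod2 _ _ (cc (p-1) e t ((i:ℕ)-1) - cc (p-1) e t (i:ℕ)) (by ring)
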